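/- Let m be a positive half-integer, s a half-integer, and p a nonnegative integer such that mp ∈ ℤ. Then for all τ in the upper half-plane and z1, z2 ∈ ℂ (with all denominators nonzero): Φ^{[m,s]}(τ, z1, z2+pτ, 0) = e^{−2πimpz1} Φ^{[m,s]}(τ, z1, z2, 0) − e^{−2πimpz1} Σ_{k=0}^{mp−1} e^{πi(s+k)(z1−z2)} q^{−(s+k)²/(4m)} [θ_{s+k,m} − θ_{−(s+k),m}](τ, z1+z2). -/

import Mathlib

/-! Replacing `z2` by `z2 + pτ` and reindexing `j ↦ j + p` in `Φ_2` gives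
`Φ^{[m,s]}(τ, z1, z2 + pτ, 0) = e^{-2πimpz1} Φ^{[m,s+mp]}(τ, z1, z2, 0)`.
Raising `s` by one multiplies the `j`-th numerator of `Φ_1` by `x_j = e^{2πiz1} q^j` (of `Φ_2` by
`e^{-2πiz2} q^j`), and `x/(1 - x) = 1/(1 - x) - 1` splits off a series without denominators,
which is `θ_{s,m}(τ, z1 + z2)` (resp. `θ_{-s,m}`) up to the factor `e^{πis(z1-z2)} q^{-s²/4m}`.
Doing this `mp` times yields the finite sum. -/

open Complex

noncomputable section

namespace Wakimoto

/-- `qpow τ x = e^{2πiτx}`, i.e. `q^x` where `q = e^{2πiτ}`. -/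
def qpow (τ x : ℂ) : ℂ := Complex.exp (2 * Real.pi * Complex.I * τ * x)

/-- `e2 z = e^{2πiz}`. -/
def e2 (z : ℂ) : ℂ := Complex.exp (2 * Real.pi * Complex.I * z)

/-- The mock theta function `Φ^{[m,s]}_1`. -/
def Phi1 (m s : ℂ) (τ z1 z2 t : ℂ) : ℂ :=
  Complex.exp (-(2 * Real.pi * Complex.I) * m * t) *
    ∑' j : ℤ,
      Complex.exp (2 * Real.pi * Complex.I * (m * (j : ℂ) * (z1 + z2) + s * z1)) *
          qpow τ (m * (j : ℂ) ^ 2 + s * (j : ℂ)) /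
        (1 - e2 z1 * qpow τ (j : ℂ))

/-- The mock theta function `Φ^{[m,s]}_2`. -/
def Phi2 (m s : ℂ) (τ z1 z2 t : ℂ) : ℂ :=
  Complex.exp (-(2 * Real.pi * Complex.I) * m * t) *
    ∑' j : ℤ,
      Complex.exp (-(2 * Real.pi * Complex.I) * (m * (j : ℂ) * (z1 + z2) + s * z2)) *
          qpow τ (m * (j : ℂ) ^ 2 + s * (j : ℂ)) /
        (1 - e2 (-z2) * qpow τ (j : ℂ))

/-- `Φ^{[m,s]} = Φ^{[m,s]}_1 - Φ^{[m,s]}_2`. -/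
def Phi (m s : ℂ) (τ z1 z2 t : ℂ) : ℂ :=
  Phi1 m s τ z1 z2 t - Phi2 m s τ z1 z2 t

/-- Jacobi's theta function `θ_{k,m}`. -/
def jTheta (k m : ℂ) (τ z : ℂ) : ℂ :=
  ∑' j : ℤ,
    Complex.exp (2 * Real.pi * Complex.I * (m * ((j : ℂ) + k / (2 * m)) * z)) *
      qpow τ (m * ((j : ℂ) + k / (2 * m)) ^ 2)

/-- The signed theta function `θ^{(-)}_{k,m}`. -/
def jThetaM (k m : ℂ) (τ z : ℂ) : ℂ :=
  ∑' j : ℤ,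
    (-1 : ℂ) ^ j *
      Complex.exp (2 * Real.pi * Complex.I * (m * ((j : ℂ) + k / (2 * m)) * z)) *
      qpow τ (m * ((j : ℂ) + k / (2 * m)) ^ 2)

/-- The Dedekind eta function. -/
def eta (τ : ℂ) : ℂ := qpow τ (1 / 24) * ∏' n : ℕ, (1 - qpow τ ((n : ℂ) + 1))

/-- The Mumford theta functions `ϑ_{ab}`. -/
def mumford (a b : ℕ) (τ z : ℂ) : ℂ :=
  ∑' n : ℤ,
    Complex.exp (Real.pi * Complex.I * τ * ((n : ℂ) + (a : ℂ) / 2) ^ 2 +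
      2 * Real.pi * Complex.I * ((n : ℂ) + (a : ℂ) / 2) * (z + (b : ℂ) / 2))

/-- `z` lies in the lattice `ℤ + ℤτ`. -/
def InLattice (τ z : ℂ) : Prop := ∃ a b : ℤ, z = (a : ℂ) + (b : ℂ) * τ

open Filter

lemma summable_cexp_quadratic {α : ℂ} (hα : α.re < 0) (β : ℂ) :
    Summable fun j : ℤ => cexp (α * (j : ℂ) ^ 2 + β * j) := by
  have hτ : 0 < (α / (Real.pi * I)).im := by
    rw [div_mul_eq_div_div, div_I, neg_im, mul_I_im, div_ofReal_re, neg_pos]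
    exact div_neg_of_neg_of_pos hα Real.pi_pos
  refine ((summable_jacobiTheta₂_term_iff (β / (2 * Real.pi * I)) _).2 hτ).congr fun j => ?_
  rw [jacobiTheta₂_term]
  congr 1
  field_simp
  ring

lemma summable_cexp_mul_qpow {m τ : ℂ} (hmτ : 0 < (m * τ).im) (s β : ℂ) :
    Summable fun j : ℤ => cexp (β * j) * qpow τ (m * (j : ℂ) ^ 2 + s * j) := by
  have hα : (2 * Real.pi * I * τ * m).re < 0 := by
    rw [show 2 * Real.pi * I * τ * m = (2 * Real.pi : ℝ) * (m * τ) * I by push_cast; ring,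
      mul_I_re, im_ofReal_mul, neg_lt_zero]
    exact mul_pos Real.two_pi_pos hmτ
  refine (summable_cexp_quadratic hα (β + 2 * Real.pi * I * τ * s)).congr fun j => ?_
  rw [qpow, ← Complex.exp_add]
  ring_nf

lemma e2_mul_qpow (z τ x : ℂ) : e2 z * qpow τ x = e2 (z + τ * x) := by
  rw [e2, qpow, e2, ← Complex.exp_add]
  ring_nf

lemma norm_e2 (z : ℂ) : ‖e2 z‖ = Real.exp (-(2 * Real.pi * z.im)) := by
  rw [e2, norm_exp]
  simp

lemma e2_eq_one_iff {z : ℂ} : e2 z = 1 ↔ ∃ n : ℤ, z = n := by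
  have h2πI : 2 * (Real.pi : ℂ) * I ≠ 0 := by simp [Real.pi_ne_zero]
  rw [e2, Complex.exp_eq_one_iff]
  refine exists_congr fun n => ?_
  rw [mul_comm _ (2 * (Real.pi : ℂ) * I)]
  exact mul_right_inj' h2πI

lemma one_sub_e2_mul_qpow_ne_zero {τ z : ℂ} (hz : ¬ InLattice τ z) (j : ℤ) :
    1 - e2 z * qpow τ j ≠ 0 := by
  rw [e2_mul_qpow, sub_ne_zero, ne_comm, Ne, e2_eq_one_iff]
  rintro ⟨n, hn⟩
  exact hz ⟨n, -j, by push_cast; linear_combination hn⟩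

lemma not_inLattice_neg {τ z : ℂ} (hz : ¬ InLattice τ z) : ¬ InLattice τ (-z) := by
  rintro ⟨a, b, hab⟩
  exact hz ⟨-a, -b, by push_cast; linear_combination -hab⟩

lemma half_le_abs_one_sub_exp {t : ℝ} (ht : t ∉ Set.Icc (-1) 1) :
    1 / 2 ≤ |1 - Real.exp t| := by
  have he : 2 ≤ Real.exp 1 := by linarith [Real.add_one_le_exp 1]
  rcases not_and_or.mp ht with ht | ht
  · have : Real.exp t * Real.exp 1 ≤ 1 := by
      rw [← Real.exp_add, Real.exp_le_one_iff]; linarith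
    rw [abs_of_pos (by nlinarith [Real.exp_pos t])]
    nlinarith [Real.exp_pos t]
  · have : Real.exp 1 ≤ Real.exp t := Real.exp_le_exp.2 (by linarith)
    rw [abs_of_neg (by linarith)]
    linarith

/-- The points `z + jτ` escape every horizontal strip, so `|e2 (z + jτ)|` stays away from `1`. -/
lemma eventually_half_le_norm_one_sub_e2_mul_qpow {τ : ℂ} (hτ : 0 < τ.im) (z : ℂ) :
    ∀ᶠ j : ℤ in cofinite, 1 / 2 ≤ ‖1 - e2 z * qpow τ j‖ := by
  have hb : -(2 * Real.pi * τ.im) ≠ 0 := neg_ne_zero.2 (mul_pos Real.two_pi_pos hτ).ne'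
  have hg : Tendsto (fun j : ℤ => -(2 * Real.pi * z.im) + j * -(2 * Real.pi * τ.im))
      cofinite (cocompact ℝ) :=
    ((Homeomorph.mulRight₀ _ hb).trans (Homeomorph.addLeft _)).isClosedEmbedding
      |>.tendsto_cocompact.comp Int.tendsto_coe_cofinite
  filter_upwards [hg.eventually isCompact_Icc.compl_mem_cocompact] with j hj
  calc 1 / 2 ≤ |1 - ‖e2 z * qpow τ j‖| := by
        rw [e2_mul_qpow, norm_e2]
        convert half_le_abs_one_sub_exp hj using 4
        rw [add_im, mul_im, intCast_re, intCast_im]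
        ring
    _ ≤ ‖1 - e2 z * qpow τ j‖ := by
        simpa using abs_norm_sub_norm_le (1 : ℂ) (e2 z * qpow τ j)

lemma summable_div_one_sub_e2_mul_qpow {τ : ℂ} (hτ : 0 < τ.im) (z : ℂ) {f : ℤ → ℂ}
    (hf : Summable f) : Summable fun j : ℤ => f j / (1 - e2 z * qpow τ j) := by
  refine .of_norm_bounded_eventually (hf.norm.mul_left 2) ?_
  filter_upwards [eventually_half_le_norm_one_sub_e2_mul_qpow hτ z] with j hj
  rw [norm_div, div_le_iff₀ (by linarith)]
  nlinarith [norm_nonneg (f j)]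

lemma tsum_mul_e2_mul_qpow_div {τ z : ℂ} (hτ : 0 < τ.im) (hz : ¬ InLattice τ z)
    {f : ℤ → ℂ} (hf : Summable f) :
    ∑' j : ℤ, f j * (e2 z * qpow τ j) / (1 - e2 z * qpow τ j) =
      ∑' j : ℤ, f j / (1 - e2 z * qpow τ j) - ∑' j : ℤ, f j := by
  rw [← (summable_div_one_sub_e2_mul_qpow hτ z hf).tsum_sub hf]
  refine tsum_congr fun j => ?_
  field_simp [one_sub_e2_mul_qpow_ne_zero hz j]
  ring

def phi1Num (m s τ z1 z2 : ℂ) (j : ℤ) : ℂ :=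
  cexp (2 * Real.pi * I * (m * (j : ℂ) * (z1 + z2) + s * z1)) *
    qpow τ (m * (j : ℂ) ^ 2 + s * j)

def phi2Num (m s τ z1 z2 : ℂ) (j : ℤ) : ℂ :=
  cexp (-(2 * Real.pi * I) * (m * (j : ℂ) * (z1 + z2) + s * z2)) *
    qpow τ (m * (j : ℂ) ^ 2 + s * j)

section Numerators

variable (m s τ z1 z2 : ℂ)

lemma Phi1_zero :
    Phi1 m s τ z1 z2 0 = ∑' j : ℤ, phi1Num m s τ z1 z2 j / (1 - e2 z1 * qpow τ j) := by
  rw [Phi1, mul_zero, Complex.exp_zero, one_mul]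
  rfl

lemma Phi2_zero :
    Phi2 m s τ z1 z2 0 = ∑' j : ℤ, phi2Num m s τ z1 z2 j / (1 - e2 (-z2) * qpow τ j) := by
  rw [Phi2, mul_zero, Complex.exp_zero, one_mul]
  rfl

lemma phi1Num_add_one (j : ℤ) :
    phi1Num m (s + 1) τ z1 z2 j = phi1Num m s τ z1 z2 j * (e2 z1 * qpow τ j) := by
  simp only [phi1Num, qpow, e2, ← Complex.exp_add]
  ring_nf

lemma phi2Num_add_one (j : ℤ) :
    phi2Num m (s + 1) τ z1 z2 j = phi2Num m s τ z1 z2 j * (e2 (-z2) * qpow τ j) := by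
  simp only [phi2Num, qpow, e2, ← Complex.exp_add]
  ring_nf

lemma phi1Num_add_intCast_mul (p j : ℤ) :
    phi1Num m s τ z1 (z2 + p * τ) j =
      cexp (-(2 * Real.pi * I) * m * p * z1) * phi1Num m (s + m * p) τ z1 z2 j := by
  simp only [phi1Num, qpow, ← Complex.exp_add]
  ring_nf

lemma phi2Num_add_intCast_mul (p j : ℤ) :
    phi2Num m s τ z1 (z2 + p * τ) (j + p) =
      cexp (-(2 * Real.pi * I) * m * p * z1) * phi2Num m (s + m * p) τ z1 z2 j := by
  simp only [phi2Num, qpow, ← Complex.exp_add]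
  push_cast
  ring_nf

end Numerators

lemma Phi1_add_intCast_mul (m s τ z1 z2 : ℂ) (p : ℤ) :
    Phi1 m s τ z1 (z2 + p * τ) 0 =
      cexp (-(2 * Real.pi * I) * m * p * z1) * Phi1 m (s + m * p) τ z1 z2 0 := by
  simp only [Phi1_zero, phi1Num_add_intCast_mul, mul_div_assoc, tsum_mul_left]

lemma Phi2_add_intCast_mul (m s τ z1 z2 : ℂ) (p : ℤ) :
    Phi2 m s τ z1 (z2 + p * τ) 0 =
      cexp (-(2 * Real.pi * I) * m * p * z1) * Phi2 m (s + m * p) τ z1 z2 0 := by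
  have hden (j : ℤ) : e2 (-(z2 + p * τ)) * qpow τ (j + p : ℤ) = e2 (-z2) * qpow τ j := by
    rw [e2_mul_qpow, e2_mul_qpow]
    push_cast
    ring_nf
  rw [Phi2_zero, Phi2_zero, ← (Equiv.addRight p).tsum_eq, ← tsum_mul_left]
  simp only [Equiv.coe_addRight, phi2Num_add_intCast_mul, hden, mul_div_assoc]

lemma Phi_add_intCast_mul (m s τ z1 z2 : ℂ) (p : ℤ) :
    Phi m s τ z1 (z2 + p * τ) 0 =
      cexp (-(2 * Real.pi * I) * m * p * z1) * Phi m (s + m * p) τ z1 z2 0 := by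
  rw [Phi, Phi, Phi1_add_intCast_mul, Phi2_add_intCast_mul, mul_sub]

lemma summable_phi1Num {m τ : ℂ} (hmτ : 0 < (m * τ).im) (s z1 z2 : ℂ) :
    Summable (phi1Num m s τ z1 z2) := by
  refine (summable_cexp_mul_qpow hmτ s (2 * Real.pi * I * m * (z1 + z2))).mul_left
    (cexp (2 * Real.pi * I * s * z1)) |>.congr fun j => ?_
  simp only [phi1Num, ← mul_assoc, ← Complex.exp_add]
  ring_nf

lemma summable_phi2Num {m τ : ℂ} (hmτ : 0 < (m * τ).im) (s z1 z2 : ℂ) :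
    Summable (phi2Num m s τ z1 z2) := by
  refine (summable_cexp_mul_qpow hmτ s (-(2 * Real.pi * I * m * (z1 + z2)))).mul_left
    (cexp (-(2 * Real.pi * I * s * z2))) |>.congr fun j => ?_
  simp only [phi2Num, ← mul_assoc, ← Complex.exp_add]
  ring_nf

lemma tsum_phi1Num {m : ℂ} (hm : m ≠ 0) (s τ z1 z2 : ℂ) :
    ∑' j : ℤ, phi1Num m s τ z1 z2 j = cexp (Real.pi * I * s * (z1 - z2)) *
      qpow τ (-(s ^ 2) / (4 * m)) * jTheta s m τ (z1 + z2) := by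
  rw [jTheta, ← tsum_mul_left]
  refine tsum_congr fun j => ?_
  simp only [phi1Num, qpow, ← Complex.exp_add]
  congr 1
  field_simp
  ring

lemma tsum_phi2Num {m : ℂ} (hm : m ≠ 0) (s τ z1 z2 : ℂ) :
    ∑' j : ℤ, phi2Num m s τ z1 z2 j = cexp (Real.pi * I * s * (z1 - z2)) *
      qpow τ (-(s ^ 2) / (4 * m)) * jTheta (-s) m τ (z1 + z2) := by
  rw [jTheta, ← (Equiv.neg ℤ).tsum_eq, ← tsum_mul_left]
  refine tsum_congr fun j => ?_
  simp only [phi2Num, Equiv.neg_apply, Int.cast_neg, qpow, ← Complex.exp_add]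
  congr 1
  field_simp
  ring

lemma Phi1_add_one {m τ z1 : ℂ} (hτ : 0 < τ.im) (hmτ : 0 < (m * τ).im)
    (hz1 : ¬ InLattice τ z1) (s z2 : ℂ) :
    Phi1 m (s + 1) τ z1 z2 0 = Phi1 m s τ z1 z2 0 - cexp (Real.pi * I * s * (z1 - z2)) *
      qpow τ (-(s ^ 2) / (4 * m)) * jTheta s m τ (z1 + z2) := by
  have hm : m ≠ 0 := by rintro rfl; simp at hmτ
  simp only [Phi1_zero, phi1Num_add_one, ← tsum_phi1Num hm]
  exact tsum_mul_e2_mul_qpow_div hτ hz1 (summable_phi1Num hmτ s z1 z2)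

lemma Phi2_add_one {m τ z2 : ℂ} (hτ : 0 < τ.im) (hmτ : 0 < (m * τ).im)
    (hz2 : ¬ InLattice τ z2) (s z1 : ℂ) :
    Phi2 m (s + 1) τ z1 z2 0 = Phi2 m s τ z1 z2 0 - cexp (Real.pi * I * s * (z1 - z2)) *
      qpow τ (-(s ^ 2) / (4 * m)) * jTheta (-s) m τ (z1 + z2) := by
  have hm : m ≠ 0 := by rintro rfl; simp at hmτ
  simp only [Phi2_zero, phi2Num_add_one, ← tsum_phi2Num hm]
  exact tsum_mul_e2_mul_qpow_div hτ (not_inLattice_neg hz2) (summable_phi2Num hmτ s z1 z2)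

lemma Phi_add_one {m τ z1 z2 : ℂ} (hτ : 0 < τ.im) (hmτ : 0 < (m * τ).im)
    (hz1 : ¬ InLattice τ z1) (hz2 : ¬ InLattice τ z2) (s : ℂ) :
    Phi m (s + 1) τ z1 z2 0 = Phi m s τ z1 z2 0 - cexp (Real.pi * I * s * (z1 - z2)) *
      qpow τ (-(s ^ 2) / (4 * m)) * (jTheta s m τ (z1 + z2) - jTheta (-s) m τ (z1 + z2)) := by
  rw [Phi, Phi, Phi1_add_one hτ hmτ hz1, Phi2_add_one hτ hmτ hz2]
  ring

lemma Phi_add_natCast {m τ z1 z2 : ℂ} (hτ : 0 < τ.im) (hmτ : 0 < (m * τ).im)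
    (hz1 : ¬ InLattice τ z1) (hz2 : ¬ InLattice τ z2) (s : ℂ) (n : ℕ) :
    Phi m (s + n) τ z1 z2 0 = Phi m s τ z1 z2 0 -
      ∑ k ∈ Finset.range n, cexp (Real.pi * I * (s + k) * (z1 - z2)) *
        qpow τ (-((s + k) ^ 2) / (4 * m)) *
        (jTheta (s + k) m τ (z1 + z2) - jTheta (-(s + k)) m τ (z1 + z2)) := by
  induction n with
  | zero => simp
  | succ n ih =>
    rw [Nat.cast_succ, ← add_assoc, Phi_add_one hτ hmτ hz1 hz2, ih, Finset.sum_range_succ]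
    ring

theorem statement8_general (m s : ℝ) (hm : ∃ n : ℕ, 0 < n ∧ m = n / 2)
    (p N : ℕ) (hN : m * (p : ℝ) = (N : ℝ))
    (τ : ℂ) (hτ : 0 < τ.im) (z1 z2 : ℂ)
    (hz1 : ¬ InLattice τ z1) (hz2 : ¬ InLattice τ z2) :
    Phi (m : ℂ) (s : ℂ) τ z1 (z2 + (p : ℂ) * τ) 0 =
      Complex.exp (-(2 * Real.pi * Complex.I) * (m : ℂ) * (p : ℂ) * z1) *
          Phi (m : ℂ) (s : ℂ) τ z1 z2 0 -
        Complex.exp (-(2 * Real.pi * Complex.I) * (m : ℂ) * (p : ℂ) * z1) *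
          ∑ k ∈ Finset.range N,
            Complex.exp (Real.pi * Complex.I * ((s : ℂ) + (k : ℂ)) * (z1 - z2)) *
              qpow τ (-(((s : ℂ) + (k : ℂ)) ^ 2) / (4 * (m : ℂ))) *
              (jTheta ((s : ℂ) + (k : ℂ)) (m : ℂ) τ (z1 + z2) -
                jTheta (-((s : ℂ) + (k : ℂ))) (m : ℂ) τ (z1 + z2)) := by
  obtain ⟨n, hn, hmn⟩ := hm
  have hmτ : 0 < ((m : ℂ) * τ).im := by
    rw [im_ofReal_mul]
    exact mul_pos (by rw [hmn]; positivity) hτ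
  have hmp : (m : ℂ) * p = N := by exact_mod_cast hN
  have hshift := Phi_add_intCast_mul m s τ z1 z2 p
  rw [Int.cast_natCast] at hshift
  rw [hshift, hmp, Phi_add_natCast hτ hmτ hz1 hz2, mul_sub]

theorem statement8 (m s : ℝ) (hm : ∃ n : ℕ, 0 < n ∧ m = n / 2)
    (hs : ∃ a : ℤ, s = a / 2) (p N : ℕ) (hN : m * (p : ℝ) = (N : ℝ))
    (τ : ℂ) (hτ : 0 < τ.im) (z1 z2 : ℂ)
    (hz1 : ¬ InLattice τ z1) (hz2 : ¬ InLattice τ z2) :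
    Phi (m : ℂ) (s : ℂ) τ z1 (z2 + (p : ℂ) * τ) 0 =
      Complex.exp (-(2 * Real.pi * Complex.I) * (m : ℂ) * (p : ℂ) * z1) *
          Phi (m : ℂ) (s : ℂ) τ z1 z2 0 -
        Complex.exp (-(2 * Real.pi * Complex.I) * (m : ℂ) * (p : ℂ) * z1) *
          ∑ k ∈ Finset.range N,
            Complex.exp (Real.pi * Complex.I * ((s : ℂ) + (k : ℂ)) * (z1 - z2)) *
              qpow τ (-(((s : ℂ) + (k : ℂ)) ^ 2) / (4 * (m : ℂ))) *
              (jTheta ((s : ℂ) + (k : ℂ)) (m : ℂ) τ (z1 + z2) -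
                jTheta (-((s : ℂ) + (k : ℂ))) (m : ℂ) τ (z1 + z2)) :=
  statement8_general m s hm p N hN τ hτ z1 z2 hz1 hz2

end Wakimoto
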